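/- arXiv:1809.09227 — 5 statements merged into one kernel-verified Lean document; each statement's English description precedes it below -/
import Mathlib

section
/- A degree sequence d₁ ≥ d₂ ≥ ... ≥ dₙ of non-negative integers is realizable by a loopless multigraph if and only if the sum d₁ + ... + dₙ is even and d₁ ≤ d₂ + ... + dₙ. -/
open Finset

/-- A loopless multigraph on `n` vertices, given by a symmetric edge-multiplicity
function with zero diagonal. -/
structure Multigraph (n : ℕ) where
  W : Fin n → Fin n → ℕ
  symm : ∀ u v, W u v = W v u
  loopless : ∀ v, W v v = 0

namespace Multigraph

variable {n : ℕ}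

/-- Number of edges (with multiplicity) with both endpoints in `S`. -/
def edgesIn (G : Multigraph n) (S : Finset (Fin n)) : ℕ :=
  ∑ u ∈ S, ∑ v ∈ S.filter (fun v => u < v), G.W u v

/-- Total number of edges (with multiplicity). -/
def edgeCount (G : Multigraph n) : ℕ := G.edgesIn Finset.univ

/-- Degree of a vertex: the number of edge-endpoints at `v`, with multiplicity. -/
def degree (G : Multigraph n) (v : Fin n) : ℕ := ∑ u, G.W v u

/-- A multigraph is almost regular if any two degrees differ by at most one. -/
def AlmostRegular (G : Multigraph n) : Prop :=
  ∀ u v, G.degree u ≤ G.degree v + 1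

/-- The underlying simple graph (adjacency = at least one edge). -/
def toSimple (G : Multigraph n) : SimpleGraph (Fin n) where
  Adj u v := u ≠ v ∧ 0 < G.W u v
  symm := by
    constructor
    intro u v h
    refine ⟨h.1.symm, ?_⟩
    rw [G.symm v u]
    exact h.2
  loopless := by
    constructor
    intro v h
    exact h.1 rfl

end Multigraph

/-- Number of edges of a simple graph with both endpoints in `S`. -/
noncomputable def SimpleGraph.edgesIn {V : Type*} (G : SimpleGraph V) (S : Finset V) : ℕ :=
  {e ∈ G.edgeSet | ∀ x ∈ e, x ∈ S}.ncard

/-!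
Necessity: every edge contributes two to the degree sum, and every edge at a vertex `v` ends at
another vertex, so `d v` is at most the sum of the other degrees. Sufficiency, by induction on
half the degree sum `m`: the condition reads `d k ≤ m` for all `k`, and joining the two vertices of
largest demand by an edge reduces the problem to one with `m - 1`, because the third largest
demand is at most `⌊(2m) / 3⌋ ≤ m - 1`.
-/

theorem exists_ne_eq_add_single_add_single {ι : Type*} [Fintype ι] [DecidableEq ι]
    {d : ι → ℕ} {m : ℕ} (hsum : ∑ i, d i = 2 * (m + 1)) (hle : ∀ k, d k ≤ m + 1) :
    ∃ i j, i ≠ j ∧ ∃ d' : ι → ℕ, d = d' + Pi.single i 1 + Pi.single j 1 ∧ ∀ k, d' k ≤ m := by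
  obtain ⟨i₀, -, -⟩ := exists_ne_zero_of_sum_ne_zero (s := univ) (f := d) (by omega)
  obtain ⟨i, -, hi⟩ := exists_max_image univ d ⟨i₀, mem_univ _⟩
  have split_i := add_sum_erase univ d (mem_univ i)
  obtain ⟨k₀, hk₀, hdk₀⟩ :=
    exists_ne_zero_of_sum_ne_zero (s := univ.erase i) (f := d) (by have := hle i; omega)
  obtain ⟨j, hj, hjmax⟩ := exists_max_image (univ.erase i) d ⟨k₀, hk₀⟩
  have split_j := add_sum_erase (univ.erase i) d hj
  have hij : i ≠ j := (ne_of_mem_erase hj).symm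
  have hdj : 0 < d j := by have := hjmax k₀ hk₀; omega
  have hji : d j ≤ d i := hi j (mem_univ j)
  refine ⟨i, j, hij, d - Pi.single i 1 - Pi.single j 1, ?_, fun k => ?_⟩
  · ext k
    rcases eq_or_ne k i with rfl | hki
    · simp [Pi.single_eq_of_ne hij]
      omega
    rcases eq_or_ne k j with rfl | hkj
    · simp [Pi.single_eq_of_ne hki]
      omega
    simp [Pi.single_eq_of_ne hki, Pi.single_eq_of_ne hkj]
  · rcases eq_or_ne k i with rfl | hki
    · simp [Pi.single_eq_of_ne hij, hle k]
    rcases eq_or_ne k j with rfl | hkj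
    · simp [Pi.single_eq_of_ne hki, hle k]
    have hk : d k ≤ ∑ l ∈ (univ.erase i).erase j, d l :=
      single_le_sum (fun _ _ => Nat.zero_le _) (by simp [hki, hkj])
    have hkj' : d k ≤ d j := hjmax k (by simp [hki])
    simp only [Pi.sub_apply, Pi.single_eq_of_ne hki, Pi.single_eq_of_ne hkj]
    -- `d i + d j + d k ≤ 2m + 2` and `d k ≤ d j ≤ d i`, so `3 d k ≤ 2m + 2`
    omega

namespace Multigraph

variable {n : ℕ}

instance : Zero (Multigraph n) :=
  ⟨⟨0, fun _ _ => rfl, fun _ => rfl⟩⟩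

instance : Add (Multigraph n) :=
  ⟨fun G H => ⟨G.W + H.W, fun u v => by simp only [Pi.add_apply, G.symm u v, H.symm u v],
    fun v => by simp only [Pi.add_apply, G.loopless, H.loopless]⟩⟩

@[simp]
theorem degree_zero (v : Fin n) : (0 : Multigraph n).degree v = 0 :=
  sum_const_zero

@[simp]
theorem degree_add (G H : Multigraph n) (v : Fin n) :
    (G + H).degree v = G.degree v + H.degree v :=
  sum_add_distrib

def edge (i j : Fin n) (hij : i ≠ j) : Multigraph n where
  W u v := (Pi.single i 1 : Fin n → ℕ) u * (Pi.single j 1 : Fin n → ℕ) v +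
    (Pi.single j 1 : Fin n → ℕ) u * (Pi.single i 1 : Fin n → ℕ) v
  symm u v := by ring
  loopless v := by
    by_cases hvi : v = i
    · subst hvi
      simp [Pi.single_eq_of_ne hij]
    · simp [Pi.single_eq_of_ne hvi]

theorem degree_edge (i j : Fin n) (hij : i ≠ j) (v : Fin n) :
    (edge i j hij).degree v = (Pi.single i 1 : Fin n → ℕ) v + (Pi.single j 1 : Fin n → ℕ) v := by
  simp [degree, edge, sum_add_distrib, ← mul_sum]

theorem sum_degrees_eq_twice_edgeCount (G : Multigraph n) :
    ∑ v, G.degree v = 2 * G.edgeCount := by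
  have split : ∀ v u,
      G.W v u = (if v < u then G.W v u else 0) + (if u < v then G.W u v else 0) := by
    intro v u
    rcases lt_trichotomy v u with h | rfl | h
    · simp [h, h.not_gt]
    · simp [G.loopless]
    · simp [h, h.not_gt, G.symm v u]
  have upper : ∑ v, ∑ u, (if v < u then G.W v u else 0) = G.edgeCount := by
    simp only [edgeCount, edgesIn, sum_filter]
  have lower : ∑ v, ∑ u, (if u < v then G.W u v else 0) = G.edgeCount := by
    rw [sum_comm, upper]
  calc ∑ v, G.degree v
      = ∑ v, ∑ u, ((if v < u then G.W v u else 0) + (if u < v then G.W u v else 0)) := by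
        simp only [degree, ← split]
    _ = 2 * G.edgeCount := by simp only [sum_add_distrib, upper, lower, two_mul]

theorem even_sum_degrees (G : Multigraph n) : Even (∑ v, G.degree v) :=
  G.sum_degrees_eq_twice_edgeCount ▸ even_two_mul _

theorem degree_le_sum_degree_erase (G : Multigraph n) (v : Fin n) :
    G.degree v ≤ ∑ u ∈ univ.erase v, G.degree u :=
  calc G.degree v = ∑ u ∈ univ.erase v, G.W v u := by
        rw [degree, ← add_sum_erase _ _ (mem_univ v), G.loopless, zero_add]
    _ ≤ ∑ u ∈ univ.erase v, G.degree u := by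
        refine sum_le_sum fun u _ => ?_
        rw [G.symm]
        exact single_le_sum (f := G.W u) (fun _ _ => Nat.zero_le _) (mem_univ v)

theorem exists_degree_eq_of_sum_eq_two_mul {m : ℕ} {d : Fin n → ℕ} (hsum : ∑ i, d i = 2 * m)
    (hle : ∀ i, d i ≤ m) : ∃ G : Multigraph n, ∀ i, G.degree i = d i := by
  induction m generalizing d with
  | zero =>
    refine ⟨0, fun i => ?_⟩
    rw [degree_zero, (sum_eq_zero_iff.mp hsum) i (mem_univ i)]
  | succ m ih =>
    obtain ⟨i, j, hij, d', rfl, hle'⟩ := exists_ne_eq_add_single_add_single hsum hle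
    have hsum' : ∑ k, d' k = 2 * m := by
      simp only [Pi.add_apply, sum_add_distrib, sum_pi_single', mem_univ, if_true] at hsum
      omega
    obtain ⟨G, hG⟩ := ih hsum' hle'
    exact ⟨G + edge i j hij, fun k => by
      simp only [degree_add, degree_edge, hG, Pi.add_apply, add_assoc]⟩

theorem exists_degree_eq_iff (d : Fin n → ℕ) :
    (∃ G : Multigraph n, ∀ i, G.degree i = d i) ↔
      Even (∑ i, d i) ∧ ∀ i, d i ≤ ∑ j ∈ univ.erase i, d j := by
  constructor
  · rintro ⟨G, hG⟩
    simp only [← hG]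
    exact ⟨G.even_sum_degrees, G.degree_le_sum_degree_erase⟩
  · rintro ⟨⟨m, hm⟩, hle⟩
    refine exists_degree_eq_of_sum_eq_two_mul (m := m) (by omega) fun i => ?_
    have := add_sum_erase univ d (mem_univ i)
    have := hle i
    omega

end Multigraph

theorem multigraph_degree_sequence_realizable (n : ℕ) (hn : 0 < n) (d : Fin n → ℕ)
    (hd : Antitone d) :
    (∃ G : Multigraph n, ∀ i, G.degree i = d i) ↔
      Even (∑ i, d i) ∧ d ⟨0, hn⟩ ≤ ∑ i ∈ Finset.univ.erase ⟨0, hn⟩, d i := by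
  rw [Multigraph.exists_degree_eq_iff]
  refine and_congr_right fun _ => ⟨fun hle => hle _, fun hle i => ?_⟩
  have hi : d i ≤ d ⟨0, hn⟩ := hd (Fin.mk_le_of_le_val (Nat.zero_le _))
  have := add_sum_erase univ d (mem_univ i)
  have := add_sum_erase univ d (mem_univ ⟨0, hn⟩)
  omega
end

section
/- Let G be a loopless multigraph on n ≥ 5 vertices such that every induced subgraph on 3 vertices has at most 2 edges. Then G has at most ⌊n²/4⌋ edges. -/
open Finset

/-!
If the pair `uv` carries an edge, every third vertex sends at most `2 - W u v` edges to `{u, v}`,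
so `d(u) + d(v) ≤ n` as soon as `n ≥ 4`. Summing `d(u) + d(v)` over the edges gives
`∑ d(v)² ≤ n e`, and Cauchy–Schwarz `(2e)² = (∑ d(v))² ≤ n ∑ d(v)² ≤ n² e` yields `4e ≤ n²`.
-/

namespace Multigraph

variable {n : ℕ} (G : Multigraph n)

theorem sum_sum_W_eq_two_mul_edgesIn (S : Finset (Fin n)) :
    ∑ a ∈ S, ∑ b ∈ S, G.W a b = 2 * G.edgesIn S := by
  have hsplit : ∀ a b,
      G.W a b = (if a < b then G.W a b else 0) + (if b < a then G.W b a else 0) := by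
    intro a b
    rcases lt_trichotomy a b with hab | rfl | hab
    · simp [hab, hab.not_gt]
    · simp [G.loopless]
    · simp [hab, hab.not_gt, G.symm a b]
  rw [sum_congr rfl fun a _ => sum_congr rfl fun b _ => hsplit a b]
  simp only [sum_add_distrib]
  rw [sum_comm (f := fun a b => if b < a then G.W b a else 0)]
  simp only [← sum_filter, edgesIn]
  ring

theorem sum_degree_eq_two_mul_edgeCount : ∑ v, G.degree v = 2 * G.edgeCount :=
  G.sum_sum_W_eq_two_mul_edgesIn univ

theorem edgesIn_triple {u v w : Fin n} (huv : u ≠ v) (huw : u ≠ w) (hvw : v ≠ w) :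
    G.edgesIn {u, v, w} = G.W u v + G.W u w + G.W v w := by
  have hu : u ∉ ({v, w} : Finset (Fin n)) := by simp [huv, huw]
  have hv : v ∉ ({w} : Finset (Fin n)) := by simp [hvw]
  have h := G.sum_sum_W_eq_two_mul_edgesIn {u, v, w}
  simp only [sum_insert hu, sum_insert hv, sum_singleton, G.loopless, G.symm v u, G.symm w u,
    G.symm w v] at h
  omega

section TripleBounded

variable {G} (hG : ∀ S : Finset (Fin n), S.card = 3 → G.edgesIn S ≤ 2)
include hG

theorem W_add_W_add_W_le_two {u v w : Fin n} (huv : u ≠ v) (huw : u ≠ w) (hvw : v ≠ w) :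
    G.W u v + G.W u w + G.W v w ≤ 2 := by
  rw [← G.edgesIn_triple huv huw hvw]
  exact hG _ (card_eq_three.mpr ⟨u, v, w, huv, huw, hvw, rfl⟩)

theorem degree_add_degree_le (hn : 4 ≤ n) {u v : Fin n} (huv : 0 < G.W u v) :
    G.degree u + G.degree v ≤ n := by
  have hne : u ≠ v := by rintro rfl; simp [G.loopless] at huv
  set T := (univ.erase u).erase v
  have hvu : v ∈ univ.erase u := mem_erase.mpr ⟨hne.symm, mem_univ v⟩
  have hT : #T = n - 2 := by
    rw [card_erase_of_mem hvu, card_erase_of_mem (mem_univ u), card_univ, Fintype.card_fin]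
    omega
  have hsplit : G.degree u + G.degree v = 2 * G.W u v + ∑ x ∈ T, (G.W u x + G.W v x) := by
    rw [degree, degree, ← sum_add_distrib, ← add_sum_erase _ _ (mem_univ u),
      ← add_sum_erase _ _ hvu, G.loopless, G.loopless, G.symm v u]
    ring
  have hthird : ∀ x ∈ T, G.W u x + G.W v x + G.W u v ≤ 2 := by
    intro x hx
    obtain ⟨hxv, hxu⟩ : x ≠ v ∧ x ≠ u := by simpa [T] using hx
    have := W_add_W_add_W_le_two hG hne hxu.symm hxv.symm
    omega
  have hsum : ∑ x ∈ T, (G.W u x + G.W v x) + (n - 2) * G.W u v ≤ (n - 2) * 2 := by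
    simpa [sum_add_distrib, hT] using sum_le_sum hthird
  zify [show 2 ≤ n by omega] at hsum
  -- with `w = G.W u v`, the slack `n - (2w + (n - 2)(2 - w))` is `(w - 1)(n - 4)`
  nlinarith [mul_le_mul' (show 1 ≤ G.W u v from huv) hn]

end TripleBounded

section DegreeSumBounded

variable {G} (hdeg : ∀ u v, 0 < G.W u v → G.degree u + G.degree v ≤ n)
include hdeg

theorem sum_degree_sq_le : ∑ v, G.degree v ^ 2 ≤ n * G.edgeCount := by
  have hdouble : ∑ v, ∑ u, G.W v u * (G.degree v + G.degree u) = 2 * ∑ v, G.degree v ^ 2 := by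
    have hleft : ∑ v, ∑ u, G.W v u * G.degree v = ∑ v, G.degree v ^ 2 := by
      simp only [← sum_mul, sq]
      rfl
    have hright : ∑ v, ∑ u, G.W v u * G.degree u = ∑ v, G.degree v ^ 2 := by
      rw [sum_comm]
      simp only [← sum_mul, G.symm _ _, sq]
      rfl
    simp only [mul_add, sum_add_distrib, hleft, hright]
    ring
  have hedge : ∀ v u, G.W v u * (G.degree v + G.degree u) ≤ G.W v u * n := by
    intro v u
    rcases Nat.eq_zero_or_pos (G.W v u) with h0 | hpos
    · simp [h0]
    · exact Nat.mul_le_mul_left _ (hdeg v u hpos)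
  have hbound := calc
    2 * ∑ v, G.degree v ^ 2 = ∑ v, ∑ u, G.W v u * (G.degree v + G.degree u) := hdouble.symm
    _ ≤ ∑ v, ∑ u, G.W v u * n := sum_le_sum fun v _ => sum_le_sum fun u _ => hedge v u
    _ = 2 * (n * G.edgeCount) := by
      simp only [← sum_mul, G.sum_sum_W_eq_two_mul_edgesIn, edgeCount]
      ring
  omega

theorem edgeCount_le_of_degree_add_degree_le : G.edgeCount ≤ n ^ 2 / 4 := by
  have hCS : (2 * G.edgeCount) ^ 2 ≤ n ^ 2 * G.edgeCount := calc
    (2 * G.edgeCount) ^ 2 = (∑ v, G.degree v) ^ 2 := by rw [G.sum_degree_eq_two_mul_edgeCount]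
    _ ≤ n * ∑ v, G.degree v ^ 2 := by
      simpa using sq_sum_le_card_mul_sum_sq (s := univ) (f := G.degree)
    _ ≤ n * (n * G.edgeCount) := Nat.mul_le_mul_left n (sum_degree_sq_le hdeg)
    _ = n ^ 2 * G.edgeCount := by ring
  rcases Nat.eq_zero_or_pos G.edgeCount with h0 | hpos
  · simp [h0]
  · rw [Nat.le_div_iff_mul_le four_pos]
    exact Nat.le_of_mul_le_mul_right (by nlinarith [hCS]) hpos

end DegreeSumBounded

end Multigraph

theorem mantel_multigraph (n : ℕ) (hn : 5 ≤ n) (G : Multigraph n)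
    (h : ∀ S : Finset (Fin n), S.card = 3 → G.edgesIn S ≤ 2) :
    G.edgeCount ≤ n ^ 2 / 4 :=
  Multigraph.edgeCount_le_of_degree_add_degree_le fun _ _ huv =>
    Multigraph.degree_add_degree_le h (by omega) huv
end

section
/- For n ≥ k ≥ 3, the maximum number of edges of an n-vertex simple graph in which every k-vertex induced subgraph has at most k − 1 edges equals the maximum number of edges of an n-vertex simple graph containing no cycle of length ℓ for any 3 ≤ ℓ ≤ k. -/
open Finset

/-!
A cycle of length `ℓ` spans `ℓ` edges on at most `ℓ` vertices; conversely, a nonempty vertex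
set spanning at least as many edges as vertices does not induce a forest, so it carries a cycle
of length at most its size. Hence a graph without cycles of length `3, …, k` is `F_k`-free.

Conversely, let `G` be `F_k`-free with `n ≥ k` vertices. Growing a set inside a component one
adjacent vertex at a time gains an edge per vertex, so a short cycle can only lie in a component
with fewer than `k` vertices, and the union `W` of these small components spans at most `|W|`
edges: otherwise, adding components one by one to a part spanning more edges than vertices, and
finally a connected piece of one more component, would produce `k` vertices spanning `k` edges.
Replacing the edges inside `W` by pendant edges joining the vertices of `W` to a single vertex
creates no cycle and loses no edge. If all components are small and `n > k`, the `n`-cycle is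
used instead.
-/

namespace SimpleGraph

variable {V : Type*} {G : SimpleGraph V} {S T : Set V}

def edgeSetIn (G : SimpleGraph V) (S : Set V) : Set (Sym2 V) :=
  {e ∈ G.edgeSet | ∀ x ∈ e, x ∈ S}

noncomputable def numEdgesIn (G : SimpleGraph V) (S : Set V) : ℕ :=
  (G.edgeSetIn S).ncard

@[simp]
lemma mk_mem_edgeSetIn {x y : V} :
    s(x, y) ∈ G.edgeSetIn S ↔ G.Adj x y ∧ x ∈ S ∧ y ∈ S := by
  simp [edgeSetIn]

lemma edgeSetIn_subset_edgeSet : G.edgeSetIn S ⊆ G.edgeSet := fun _ he => he.1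

lemma edgeSetIn_mono (h : S ⊆ T) : G.edgeSetIn S ⊆ G.edgeSetIn T :=
  fun _ he => ⟨he.1, fun x hx => h (he.2 x hx)⟩

lemma edgesIn_eq_numEdgesIn (S : Finset V) : G.edgesIn S = G.numEdgesIn S := rfl

@[simp]
lemma numEdgesIn_empty : G.numEdgesIn ∅ = 0 := by
  have : G.edgeSetIn ∅ = ∅ := Set.eq_empty_iff_forall_notMem.2 fun e he => by
    induction e with
    | h x y => exact (mk_mem_edgeSetIn.1 he).2.1
  rw [numEdgesIn, this, Set.ncard_empty]

@[simp]
lemma numEdgesIn_univ : G.numEdgesIn Set.univ = G.edgeSet.ncard := by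
  simp [numEdgesIn, edgeSetIn]

lemma disjoint_edgeSetIn (h : Disjoint S T) : Disjoint (G.edgeSetIn S) (G.edgeSetIn T) := by
  refine Set.disjoint_left.2 fun e heS heT => ?_
  induction e with
  | h x y =>
    have hx := Sym2.mem_mk_left x y
    exact Set.disjoint_left.1 h (heS.2 x hx) (heT.2 x hx)

section Finite

variable [Finite V]

lemma numEdgesIn_add_le (h : Disjoint S T) :
    G.numEdgesIn S + G.numEdgesIn T ≤ G.numEdgesIn (S ∪ T) := by
  rw [numEdgesIn, numEdgesIn, ← Set.ncard_union_eq (disjoint_edgeSetIn h)]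
  exact Set.ncard_le_ncard (Set.union_subset (edgeSetIn_mono Set.subset_union_left)
    (edgeSetIn_mono Set.subset_union_right))

lemma numEdgesIn_union (h : Disjoint S T) (hST : ∀ x ∈ S, ∀ y ∈ T, ¬ G.Adj x y) :
    G.numEdgesIn (S ∪ T) = G.numEdgesIn S + G.numEdgesIn T := by
  refine le_antisymm ?_ (numEdgesIn_add_le h)
  rw [numEdgesIn, numEdgesIn, numEdgesIn, ← Set.ncard_union_eq (disjoint_edgeSetIn h)]
  refine Set.ncard_le_ncard fun e he => ?_
  induction e with
  | h x y =>
    obtain ⟨hxy, hx | hx, hy | hy⟩ := mk_mem_edgeSetIn.1 he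
    · exact Or.inl (mk_mem_edgeSetIn.2 ⟨hxy, hx, hy⟩)
    · exact absurd hxy (hST x hx y hy)
    · exact absurd hxy.symm (hST y hy x hx)
    · exact Or.inr (mk_mem_edgeSetIn.2 ⟨hxy, hx, hy⟩)

lemma numEdgesIn_lt_insert {x y : V} (hx : x ∈ S) (hy : y ∉ S) (hxy : G.Adj x y) :
    G.numEdgesIn S < G.numEdgesIn (insert y S) := by
  refine Set.ncard_lt_ncard ⟨edgeSetIn_mono (Set.subset_insert y S), fun h => ?_⟩
  exact hy (mk_mem_edgeSetIn.1 (h (mk_mem_edgeSetIn.2 ⟨hxy, Or.inr hx, Or.inl rfl⟩))).2.2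

end Finite

lemma Walk.IsCycle.ncard_support_le_length {u : V} {c : G.Walk u u} (hc : c.IsCycle) :
    {x | x ∈ c.support}.ncard ≤ c.length := by
  classical
  have hu : u ∈ c.support.tail := Walk.end_mem_tail_support hc.not_nil
  have : {x | x ∈ c.support} = ↑c.support.tail.toFinset := by
    ext x
    rw [Set.mem_ofPred, Finset.mem_coe, List.mem_toFinset, ← c.cons_tail_support, List.mem_cons]
    exact ⟨fun h => h.elim (· ▸ hu) id, Or.inr⟩
  rw [this, Set.ncard_coe_finset]
  exact (List.toFinset_card_le _).trans (by simp)

lemma Walk.IsTrail.length_le_numEdgesIn [Finite V] {u v : V} {c : G.Walk u v}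
    (hc : c.IsTrail) : c.length ≤ G.numEdgesIn {x | x ∈ c.support} := by
  classical
  rw [← Walk.length_edges, ← List.toFinset_card_of_nodup hc.edges_nodup,
    ← Set.ncard_coe_finset]
  refine Set.ncard_le_ncard fun e he => ?_
  rw [Finset.mem_coe, List.mem_toFinset] at he
  exact ⟨c.edges_subset_edgeSet he, fun x hx => c.mem_support_of_mem_edges he hx⟩

lemma IsAcyclic.ncard_edgeSet_lt [Finite V] [Nonempty V] (hG : G.IsAcyclic) :
    G.edgeSet.ncard < Nat.card V := by
  obtain ⟨T, hGT, -, hT⟩ := connected_top.exists_isTree_le_of_le_of_isAcyclic le_top hG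
  rw [← (isTree_iff_connected_and_card.1 hT).2, ← Nat.card_coe_set_eq]
  exact Nat.lt_succ_of_le (Set.ncard_le_ncard (edgeSet_mono hGT))

lemma ncard_edgeSet_induce : (G.induce S).edgeSet.ncard = G.numEdgesIn S := by
  rw [numEdgesIn, ← Set.ncard_image_of_injective _ (Sym2.map.injective Subtype.val_injective)]
  congr 1
  ext e
  constructor
  · rintro ⟨e, he, rfl⟩
    induction e with
    | h a b => exact mk_mem_edgeSetIn.2 ⟨he, a.2, b.2⟩
  · induction e with
    | h x y =>
      rintro ⟨hxy, hS⟩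
      exact ⟨s(⟨x, hS x (Sym2.mem_mk_left x y)⟩, ⟨y, hS y (Sym2.mem_mk_right x y)⟩),
        hxy, rfl⟩

lemma exists_isCycle_length_le_of_ncard_le_numEdgesIn [Finite V] (hS : S.Nonempty)
    (h : S.ncard ≤ G.numEdgesIn S) :
    ∃ (u : V) (c : G.Walk u u), c.IsCycle ∧ c.length ≤ S.ncard := by
  have : Nonempty S := hS.to_subtype
  have hcyc : ¬ (G.induce S).IsAcyclic := fun hacyc => by
    have := hacyc.ncard_edgeSet_lt
    rw [ncard_edgeSet_induce, Nat.card_coe_set_eq] at this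
    omega
  obtain ⟨u, c, hc⟩ : ∃ (u : S) (c : (G.induce S).Walk u u), c.IsCycle := by
    simpa [IsAcyclic] using hcyc
  refine ⟨_, _, hc.map (f := (Embedding.induce S).toHom) Subtype.val_injective, ?_⟩
  have : Fintype S := Fintype.ofFinite S
  rw [Walk.length_map, ← Nat.card_coe_set_eq, Nat.card_eq_fintype_card]
  simpa using hc.support_nodup.length_le_card

lemma lt_egirth_iff {k : ℕ} : (k : ℕ∞) < G.egirth ↔
    ∀ (v : V) (w : G.Walk v v), w.IsCycle → ¬(3 ≤ w.length ∧ w.length ≤ k) := by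
  rw [← ENat.add_one_le_iff (ENat.natCast_ne_top k), le_egirth]
  refine forall₂_congr fun v w => imp_congr_right fun hw => ?_
  have := hw.three_le_length
  norm_cast
  omega

/-- `F_k` is the family of graphs on `k` vertices with at least `k` edges. -/
def FkFree (G : SimpleGraph V) (k : ℕ) : Prop :=
  ∀ S : Set V, S.ncard = k → G.numEdgesIn S < k

lemma fkFree_iff_forall_edgesIn_le {k : ℕ} (hk : 0 < k) :
    G.FkFree k ↔ ∀ S : Finset V, S.card = k → G.edgesIn S ≤ k - 1 := by
  refine ⟨fun h S hS => ?_, fun h S hS => ?_⟩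
  · have := h S (by rwa [Set.ncard_coe_finset])
    rw [edgesIn_eq_numEdgesIn]
    omega
  · have hfin : S.Finite := Set.finite_of_ncard_pos (hS ▸ hk)
    have := h hfin.toFinset (by rwa [← Set.ncard_eq_toFinset_card S hfin])
    rw [edgesIn_eq_numEdgesIn, Set.Finite.coe_toFinset] at this
    omega

lemma fkFree_of_lt_egirth [Finite V] {k : ℕ} (hk : 0 < k) (h : (k : ℕ∞) < G.egirth) :
    G.FkFree k := by
  intro S hS
  by_contra! hle
  obtain ⟨u, c, hc, hlen⟩ := exists_isCycle_length_le_of_ncard_le_numEdgesIn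
    (Set.nonempty_of_ncard_ne_zero (hS ▸ hk.ne')) (hS ▸ hle)
  exact (h.trans_le (egirth_le_length hc)).not_ge (by exact_mod_cast hS ▸ hlen)

namespace ConnectedComponent

variable (C : G.ConnectedComponent) {U Y : Set V}

lemma exists_adj_of_subset_supp (hU : U ⊆ C.supp) (hne : U.Nonempty)
    (hlt : U.ncard < C.supp.ncard) : ∃ x ∈ U, ∃ y ∈ C.supp, y ∉ U ∧ G.Adj x y := by
  obtain ⟨x, hx⟩ := hne
  obtain ⟨z, hzC, hzU⟩ :=
    Set.exists_of_ssubset (hU.ssubset_of_ne fun h => hlt.ne (congrArg Set.ncard h))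
  obtain ⟨p⟩ := C.reachable_of_mem_supp (hU hx) hzC
  obtain ⟨d, -, hd, hd'⟩ := p.exists_boundary_dart U hx hzU
  exact ⟨d.fst, hd, d.snd, C.mem_supp_of_adj_mem_supp (hU hd) d.adj, hd', d.adj⟩

variable [Finite V]

lemma exists_superset_ncard_eq (hU : U ⊆ C.supp) (hne : U.Nonempty) {R : ℕ}
    (hUR : U.ncard ≤ R) (hRC : R ≤ C.supp.ncard) :
    ∃ T, U ⊆ T ∧ T ⊆ C.supp ∧ T.ncard = R ∧
      G.numEdgesIn U + R ≤ G.numEdgesIn T + U.ncard := by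
  obtain ⟨d, rfl⟩ := Nat.exists_eq_add_of_le hUR
  induction d with
  | zero => exact ⟨U, subset_rfl, hU, rfl, le_rfl⟩
  | succ d ih =>
    obtain ⟨T, hUT, hTC, hT, he⟩ := ih (by omega) (by omega)
    obtain ⟨x, hx, y, hy, hyT, hxy⟩ :=
      C.exists_adj_of_subset_supp hTC (hne.mono hUT) (by omega)
    refine ⟨insert y T, hUT.trans (Set.subset_insert y T), Set.insert_subset hy hTC,
      by rw [Set.ncard_insert_of_notMem hyT, hT, add_assoc], ?_⟩
    have := numEdgesIn_lt_insert hx hyT hxy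
    omega

lemma exists_subset_ncard_eq {R : ℕ} (hR : 0 < R) (hRC : R ≤ C.supp.ncard) :
    ∃ T ⊆ C.supp, T.ncard = R ∧ R ≤ G.numEdgesIn T + 1 := by
  obtain ⟨v, hv⟩ := C.nonempty_supp
  obtain ⟨T, -, hTC, hT, he⟩ := C.exists_superset_ncard_eq (Set.singleton_subset_iff.2 hv)
    (Set.singleton_nonempty v) (by rwa [Set.ncard_singleton]) hRC
  rw [Set.ncard_singleton] at he
  exact ⟨T, hTC, hT, by omega⟩

lemma numEdgesIn_union_supp (hY : Disjoint Y C.supp) :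
    G.numEdgesIn (Y ∪ C.supp) = G.numEdgesIn Y + G.numEdgesIn C.supp :=
  numEdgesIn_union hY fun _ hx _ hy hxy =>
    Set.disjoint_left.1 hY hx ((C.mem_supp_congr_adj hxy).2 hy)

end ConnectedComponent

def smallComponentsSupp (G : SimpleGraph V) (k : ℕ) : Set V :=
  {v | (G.connectedComponentMk v).supp.ncard < k}

lemma ncard_edgeSet_eq_numEdgesIn_smallComponentsSupp_add [Finite V] (k : ℕ) :
    G.edgeSet.ncard =
      G.numEdgesIn (G.smallComponentsSupp k) + G.numEdgesIn (G.smallComponentsSupp k)ᶜ := by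
  rw [← numEdgesIn_univ, ← Set.union_compl_self (G.smallComponentsSupp k)]
  refine numEdgesIn_union disjoint_compl_right fun x hx y hy hxy => hy ?_
  simpa [smallComponentsSupp, ConnectedComponent.connectedComponentMk_eq_of_adj hxy] using hx

namespace FkFree

variable [Finite V] {k : ℕ} (hG : G.FkFree k)
include hG

lemma ncard_supp_lt_of_isCycle {u : V} {c : G.Walk u u} (hc : c.IsCycle)
    (hck : c.length ≤ k) : (G.connectedComponentMk u).supp.ncard < k := by
  classical
  by_contra! hkC
  have hUC : {x | x ∈ c.support} ⊆ (G.connectedComponentMk u).supp := fun x hx =>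
    (ConnectedComponent.sound ⟨c.takeUntil x hx⟩).symm
  have hU := hc.ncard_support_le_length
  have hUe := hc.isTrail.length_le_numEdgesIn
  obtain ⟨T, -, -, hT, he⟩ := ConnectedComponent.exists_superset_ncard_eq _ hUC
    ⟨u, c.start_mem_support⟩ (hU.trans hck) hkC
  have := hG T hT
  omega

lemma ncard_add_ncard_supp_lt {Y : Set V} (C : G.ConnectedComponent) (hY : Disjoint Y C.supp)
    (hYk : Y.ncard < k) (hYe : Y.ncard < G.numEdgesIn Y) : Y.ncard + C.supp.ncard < k := by
  by_contra! hkC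
  obtain ⟨T, hTC, hT, he⟩ := C.exists_subset_ncard_eq (R := k - Y.ncard) (by omega) (by omega)
  have hYT : Disjoint Y T := hY.mono_right hTC
  have := hG (Y ∪ T) (by rw [Set.ncard_union_eq hYT, hT]; omega)
  have := numEdgesIn_add_le (G := G) hYT
  omega

lemma ncard_union_preimage_lt (𝒞 : Set G.ConnectedComponent)
    (hsmall : ∀ C ∈ 𝒞, C.supp.ncard < k) {Y : Set V}
    (hY : Disjoint Y (G.connectedComponentMk ⁻¹' 𝒞)) (hYk : Y.ncard < k)
    (hYe : Y.Nonempty → Y.ncard < G.numEdgesIn Y)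
    (he : (Y ∪ G.connectedComponentMk ⁻¹' 𝒞).ncard <
      G.numEdgesIn (Y ∪ G.connectedComponentMk ⁻¹' 𝒞)) :
    (Y ∪ G.connectedComponentMk ⁻¹' 𝒞).ncard < k := by
  -- A component spanning at most as many edges as vertices is added last, any other is
  -- absorbed into `Y`.
  induction 𝒞, Set.toFinite 𝒞 using Set.Finite.induction_on generalizing Y with
  | empty => simpa using hYk
  | @insert C 𝒞 hC _ ih =>
    have hX : G.connectedComponentMk ⁻¹' insert C 𝒞 =
      C.supp ∪ G.connectedComponentMk ⁻¹' 𝒞 := rfl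
    rw [hX] at hY he ⊢
    have hCX : Disjoint C.supp (G.connectedComponentMk ⁻¹' 𝒞) :=
      Set.disjoint_left.2 fun x hx hx' => hC (hx ▸ hx')
    have hYC := hY.mono_right Set.subset_union_left
    have hYX := hY.mono_right Set.subset_union_right
    have hYe' : Y.ncard ≤ G.numEdgesIn Y := by
      rcases Y.eq_empty_or_nonempty with rfl | hne
      · simp
      · exact (hYe hne).le
    by_cases hCe : G.numEdgesIn C.supp ≤ C.supp.ncard
    · have hdisj : Disjoint (Y ∪ G.connectedComponentMk ⁻¹' 𝒞) C.supp :=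
        Disjoint.union_left hYC hCX.symm
      rw [Set.union_comm C.supp, ← Set.union_assoc] at he ⊢
      rw [C.numEdgesIn_union_supp hdisj, Set.ncard_union_eq hdisj] at he
      rw [Set.ncard_union_eq hdisj]
      have := ih (fun C' hC' => hsmall C' (Or.inr hC')) hYX hYk hYe (by omega)
      have := hG.ncard_add_ncard_supp_lt C hdisj this (by omega)
      omega
    · have hYCk : Y.ncard + C.supp.ncard < k := by
        rcases Y.eq_empty_or_nonempty with rfl | hne
        · simpa using hsmall C (Or.inl rfl)
        · exact hG.ncard_add_ncard_supp_lt C hYC hYk (hYe hne)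
      rw [← Set.union_assoc] at he ⊢
      refine ih (fun C' hC' => hsmall C' (Or.inr hC')) (Disjoint.union_left hYX hCX)
        (by rwa [Set.ncard_union_eq hYC]) (fun _ => ?_) he
      rw [Set.ncard_union_eq hYC, C.numEdgesIn_union_supp hYC]
      omega

lemma numEdgesIn_le_ncard (hk : k ≤ Nat.card V) :
    G.numEdgesIn (G.smallComponentsSupp k) ≤ (G.smallComponentsSupp k).ncard := by
  set W := G.smallComponentsSupp k
  by_contra! hW
  obtain ⟨w, hw⟩ : W.Nonempty := Set.nonempty_iff_ne_empty.2 fun h => by simp [h] at hW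
  have hWk : W.ncard < k := by
    have := hG.ncard_union_preimage_lt {C | C.supp.ncard < k} (fun _ h => h) (Y := ∅)
      (by simp) (by simpa using Nat.zero_lt_of_lt (show _ < k from hw)) (by simp)
      (by rwa [Set.empty_union])
    rwa [Set.empty_union] at this
  obtain ⟨b, hb⟩ := (Set.ne_univ_iff_exists_notMem W).1 fun h => by
    rw [h, Set.ncard_univ] at hWk
    omega
  have hWb : Disjoint W (G.connectedComponentMk b).supp := Set.disjoint_left.2 fun x hx hxb =>
    hb (by simpa [W, smallComponentsSupp, (ConnectedComponent.mem_supp_iff _ _).1 hxb] using hx)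
  have := hG.ncard_add_ncard_supp_lt _ hWb hWk (by omega)
  simp only [W, smallComponentsSupp, Set.mem_ofPred_eq, not_lt] at hb
  omega

end FkFree

lemma egirth_le_egirth_of_subsingleton_neighborSet {H H' : SimpleGraph V}
    (h : ∀ e ∈ H'.edgeSet \ H.edgeSet, ∃ x ∈ e, (H'.neighborSet x).Subsingleton) :
    H.egirth ≤ H'.egirth := by
  rw [le_egirth]
  intro a c hc
  have hedges : ∀ e ∈ c.edges, e ∈ H.edgeSet := by
    intro e he
    by_contra hH
    obtain ⟨x, hx, hleaf⟩ := h e ⟨c.edges_subset_edgeSet he, hH⟩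
    have hx2 := hc.ncard_neighborSet_toSubgraph_eq_two (c.mem_support_of_mem_edges he hx)
    have : Finite (c.toSubgraph.neighborSet x) := c.finite_neighborSet_toSubgraph
    have := Set.ncard_le_one_iff_subsingleton.2 (hleaf.anti (c.toSubgraph.neighborSet_subset x))
    omega
  simpa using egirth_le_length (hc.transfer hedges)

/-- Joins every vertex of `W`, isolated in `H`, to `b` by a new pendant edge. -/
lemma exists_egirth_le_ncard_edgeSet_eq [Finite V] (H : SimpleGraph V) {W : Set V} {b : V}
    (hb : b ∉ W) (hW : ∀ w ∈ W, ∀ x, ¬ H.Adj w x) :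
    ∃ H' : SimpleGraph V, H.egirth ≤ H'.egirth ∧
      H'.edgeSet.ncard = H.edgeSet.ncard + W.ncard := by
  have hbW : ∀ w ∈ W, w ≠ b := fun w hw hwb => hb (hwb ▸ hw)
  set P := (fun w => s(w, b)) '' W
  have hP : Disjoint P Sym2.diagSet := by
    refine Set.disjoint_left.2 ?_
    rintro _ ⟨w, hw, rfl⟩ hd
    exact hbW w hw (by simpa using hd)
  have hHP : Disjoint H.edgeSet P := by
    refine Set.disjoint_right.2 ?_
    rintro _ ⟨w, hw, rfl⟩ hH
    exact hW w hw b hH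
  have hEH' : (H ⊔ fromEdgeSet P).edgeSet = H.edgeSet ∪ P := by
    rw [edgeSet_sup, edgeSet_fromEdgeSet, hP.sdiff_eq_left]
  refine ⟨H ⊔ fromEdgeSet P, egirth_le_egirth_of_subsingleton_neighborSet ?_, ?_⟩
  · rintro e ⟨he, heH⟩
    rw [hEH'] at he
    obtain ⟨w, hw, rfl⟩ := he.resolve_left heH
    refine ⟨w, Sym2.mem_mk_left w b, (Set.subsingleton_singleton (a := b)).anti fun x hx => ?_⟩
    rcases hx with hx | ⟨⟨w', -, hw'⟩, -⟩
    · exact absurd hx (hW w hw x)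
    · rcases Sym2.eq_iff.1 hw' with ⟨-, h⟩ | ⟨-, h⟩
      · exact h.symm
      · exact absurd h.symm (hbW w hw)
  · rw [hEH', Set.ncard_union_eq hHP, Set.InjOn.ncard_image]
    intro w hw w' _ hww'
    rcases Sym2.eq_iff.1 hww' with ⟨h, -⟩ | ⟨h, -⟩
    · exact h
    · exact absurd h (hbW w hw)

lemma ncard_edgeSet_cycleGraph {n : ℕ} (hn : 3 ≤ n) : (cycleGraph n).edgeSet.ncard = n := by
  obtain ⟨m, rfl⟩ := Nat.exists_eq_add_of_le' hn
  have := sum_degrees_eq_twice_card_edges (cycleGraph (m + 3))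
  simp only [cycleGraph_degree_three_le, Finset.sum_const, Finset.card_univ, Fintype.card_fin,
    smul_eq_mul] at this
  rw [← coe_edgeFinset, Set.ncard_coe_finset]
  omega

open Fin.NatCast in
lemma numEdgesIn_cycleGraph_lt {n : ℕ} {S : Set (Fin n)} (hS : S.Nonempty)
    (hSu : S ≠ Set.univ) : (cycleGraph n).numEdgesIn S < S.ncard := by
  obtain ⟨m, rfl⟩ := Nat.exists_eq_succ_of_ne_zero hS.some.pos.ne'
  set S' := {i ∈ S | i + 1 ∈ S}
  have hS' : S' ⊂ S := by
    refine Set.ssubset_iff_subset_ne.2 ⟨fun i hi => hi.1, fun h => hSu ?_⟩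
    obtain ⟨x, hx⟩ := hS
    have hstep : ∀ j : ℕ, x + (j : Fin (m + 1)) ∈ S := by
      intro j
      induction j with
      | zero => simpa using hx
      | succ j ih =>
        rw [Nat.cast_succ, ← add_assoc]
        exact (h ▸ ih : x + (j : Fin (m + 1)) ∈ S').2
    refine Set.eq_univ_of_forall fun y => ?_
    simpa using hstep (y - x).val
  calc (cycleGraph (m + 1)).numEdgesIn S ≤ ((fun i => s(i, i + 1)) '' S').ncard := by
        refine Set.ncard_le_ncard fun e he => ?_
        induction e with
        | h u v =>
          obtain ⟨huv, hu, hv⟩ := mk_mem_edgeSetIn.1 he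
          have hsucc : ∀ a b : Fin (m + 1), (b - a).val = 1 → b = a + 1 := fun a b h =>
            sub_eq_iff_eq_add'.1 (Fin.ext (by
              rw [h, Fin.val_one', Nat.mod_eq_of_lt]; have := (b - a).2; omega))
          rcases (cycleGraph_adj'.1 huv) with h | h
          · obtain rfl := hsucc v u h
            exact ⟨v, ⟨hv, hu⟩, Sym2.eq_swap⟩
          · obtain rfl := hsucc u v h
            exact ⟨u, ⟨hu, hv⟩, rfl⟩
    _ ≤ S'.ncard := Set.ncard_image_le
    _ < S.ncard := Set.ncard_lt_ncard hS'

lemma le_egirth_cycleGraph (n : ℕ) : (n : ℕ∞) ≤ (cycleGraph n).egirth := by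
  rw [le_egirth]
  intro u c hc
  by_contra! hlt
  have hU := hc.ncard_support_le_length
  have hUe := hc.isTrail.length_le_numEdgesIn
  have := numEdgesIn_cycleGraph_lt (S := {x | x ∈ c.support}) ⟨u, c.start_mem_support⟩
    fun h => by
      rw [h, Set.ncard_univ, Nat.card_fin] at hU
      exact hU.not_gt (by exact_mod_cast hlt)
  omega

namespace FkFree

variable [Finite V] {k : ℕ} (hG : G.FkFree k)
include hG

lemma lt_egirth_fromEdgeSet_edgeSetIn :
    (k : ℕ∞) < (fromEdgeSet (G.edgeSetIn (G.smallComponentsSupp k)ᶜ)).egirth := by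
  rw [← ENat.add_one_le_iff (ENat.natCast_ne_top k), le_egirth]
  intro u c hc
  have hu := (mk_mem_edgeSetIn.1 ((fromEdgeSet_adj _).1 (c.adj_snd hc.not_nil)).1).2.1
  have hle : fromEdgeSet (G.edgeSetIn (G.smallComponentsSupp k)ᶜ) ≤ G :=
    (fromEdgeSet_le G).2 (Set.sdiff_subset.trans edgeSetIn_subset_edgeSet)
  by_contra! hck
  refine hu (hG.ncard_supp_lt_of_isCycle (hc.mapLe hle) ?_)
  rw [Walk.length_mapLe]
  exact_mod_cast Order.le_of_lt_add_one hck

lemma exists_lt_egirth_ncard_edgeSet_eq (b : V) :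
    ∃ H : SimpleGraph V, (k : ℕ∞) < H.egirth ∧ H.edgeSet.ncard =
      G.numEdgesIn (G.smallComponentsSupp k)ᶜ + (G.smallComponentsSupp k \ {b}).ncard := by
  have hW : ∀ w ∈ G.smallComponentsSupp k \ {b}, ∀ x,
      ¬ (fromEdgeSet (G.edgeSetIn (G.smallComponentsSupp k)ᶜ)).Adj w x :=
    fun w hw x hwx => (mk_mem_edgeSetIn.1 ((fromEdgeSet_adj _).1 hwx).1).2.1 hw.1
  obtain ⟨H, hH, hHe⟩ := exists_egirth_le_ncard_edgeSet_eq _ (b := b) (by simp) hW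
  refine ⟨H, hG.lt_egirth_fromEdgeSet_edgeSetIn.trans_le hH, ?_⟩
  have hdiag : Disjoint (G.edgeSetIn (G.smallComponentsSupp k)ᶜ) Sym2.diagSet :=
    Set.disjoint_left.2 fun e he hd => G.not_isDiag_of_mem_edgeSet he.1 hd
  rw [hHe, edgeSet_fromEdgeSet, hdiag.sdiff_eq_left]
  rfl

end FkFree

lemma FkFree.exists_lt_egirth_le_ncard_edgeSet {n k : ℕ} {G : SimpleGraph (Fin n)}
    (hG : G.FkFree k) (hk : 3 ≤ k) (hn : k ≤ n) :
    ∃ H : SimpleGraph (Fin n), (k : ℕ∞) < H.egirth ∧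
      G.edgeSet.ncard ≤ H.edgeSet.ncard := by
  set W := G.smallComponentsSupp k
  have hW : G.numEdgesIn W ≤ W.ncard := hG.numEdgesIn_le_ncard (by simpa using hn)
  have hsplit : G.edgeSet.ncard = G.numEdgesIn W + G.numEdgesIn Wᶜ :=
    G.ncard_edgeSet_eq_numEdgesIn_smallComponentsSupp_add k
  by_cases hcyc : W = Set.univ ∧ k < n
  · refine ⟨cycleGraph n, (Nat.cast_lt.2 hcyc.2).trans_le (le_egirth_cycleGraph n), ?_⟩
    rw [ncard_edgeSet_cycleGraph (by omega), hsplit, hcyc.1, Set.compl_univ, numEdgesIn_empty]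
    simpa [hcyc.1] using hW
  obtain ⟨b, hb⟩ : ∃ b, G.numEdgesIn W ≤ (W \ {b}).ncard := by
    by_cases hWu : W = Set.univ
    · have hnk : n = k := by
        by_contra
        exact hcyc ⟨hWu, by omega⟩
      have := hG Set.univ (by simp [hnk])
      refine ⟨⟨0, by omega⟩, ?_⟩
      rw [hWu, Set.ncard_sdiff_singleton_of_mem (Set.mem_univ _), Set.ncard_univ, Nat.card_fin]
      omega
    · obtain ⟨b, hb⟩ := (Set.ne_univ_iff_exists_notMem W).1 hWu
      exact ⟨b, by rwa [Set.sdiff_singleton_eq_self hb]⟩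
  obtain ⟨H, hH, hHe⟩ := hG.exists_lt_egirth_ncard_edgeSet_eq b
  change _ = G.numEdgesIn Wᶜ + (W \ {b}).ncard at hHe
  exact ⟨H, hH, by omega⟩

lemma sSup_ncard_edgeSet_le_sSup [Finite V] {P Q : SimpleGraph V → Prop} (hP : ∃ G, P G)
    (h : ∀ G, P G → ∃ H, Q H ∧ G.edgeSet.ncard ≤ H.edgeSet.ncard) :
    sSup {m | ∃ G, P G ∧ G.edgeSet.ncard = m} ≤
      sSup {m | ∃ G, Q G ∧ G.edgeSet.ncard = m} := by
  obtain ⟨G₀, hG₀⟩ := hP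
  have hbdd : BddAbove {m | ∃ G, Q G ∧ G.edgeSet.ncard = m} :=
    ⟨Nat.card (Sym2 V), by rintro _ ⟨G, -, rfl⟩; exact Set.ncard_le_card _⟩
  refine csSup_le ⟨_, G₀, hG₀, rfl⟩ ?_
  rintro _ ⟨G, hG, rfl⟩
  obtain ⟨H, hH, hGH⟩ := h G hG
  exact hGH.trans (le_csSup hbdd ⟨H, hH, rfl⟩)

end SimpleGraph

theorem ex_F_eq_ex_cycles (n k : ℕ) (hk : 3 ≤ k) (hn : k ≤ n) :
    sSup {m | ∃ G : SimpleGraph (Fin n),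
        (∀ S : Finset (Fin n), S.card = k → G.edgesIn S ≤ k - 1) ∧ G.edgeSet.ncard = m}
      = sSup {m | ∃ G : SimpleGraph (Fin n),
        (∀ (v : Fin n) (w : G.Walk v v), w.IsCycle → ¬(3 ≤ w.length ∧ w.length ≤ k)) ∧
        G.edgeSet.ncard = m} := by
  simp_rw [← SimpleGraph.fkFree_iff_forall_edgesIn_le (by omega : 0 < k),
    ← SimpleGraph.lt_egirth_iff]
  have hbot : (k : ℕ∞) < (⊥ : SimpleGraph (Fin n)).egirth := by simp
  have hbotF : (⊥ : SimpleGraph (Fin n)).FkFree k :=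
    SimpleGraph.fkFree_of_lt_egirth (by omega) hbot
  exact le_antisymm
    (SimpleGraph.sSup_ncard_edgeSet_le_sSup ⟨⊥, hbotF⟩
      fun G hG => hG.exists_lt_egirth_le_ncard_edgeSet hk hn)
    (SimpleGraph.sSup_ncard_edgeSet_le_sSup ⟨⊥, hbot⟩
      fun G hG => ⟨G, SimpleGraph.fkFree_of_lt_egirth (by omega) hG, le_rfl⟩)
end

section
/- Let G be a forest on n vertices and let k ≤ n. If t is the minimum number of connected components of G needed so that their total vertex count is at least k, then the maximum number of edges in any induced subgraph of G on k vertices is exactly k − t. -/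
/-!
A set `S` of vertices of a forest meeting `m` components spans at most `#S - m` edges: each
nonempty trace of `S` on a component induces a forest, and a forest has fewer edges than vertices
(it extends to a spanning tree of the complete graph on its vertices). By minimality of `t`, a
`k`-set meets at least `t` components. Conversely, `t` components with at least `k` vertices in
total contain `k` vertices forming at most `t` connected pieces, each grown one neighbour at a
time, so that a piece with `r` vertices spans at least `r - 1` edges.
-/

open Finset

namespace SimpleGraph

variable {V : Type*} {G : SimpleGraph V}

lemma edgesIn_eq_natCard_induce (A : Finset V) :
    G.edgesIn A = Nat.card (G.induce (A : Set V)).edgeSet := by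
  have himage : {e ∈ G.edgeSet | ∀ x ∈ e, x ∈ A} =
      Sym2.map Subtype.val '' (G.induce (A : Set V)).edgeSet := by
    ext e
    induction e with
    | _ u v =>
      constructor
      · rintro ⟨huv, hA⟩
        exact ⟨s(⟨u, hA u (Sym2.mem_mk_left u v)⟩, ⟨v, hA v (Sym2.mem_mk_right u v)⟩), huv, rfl⟩
      · rintro ⟨e, he, hev⟩
        induction e
        rw [← hev]
        exact ⟨he, by simp⟩
  rw [edgesIn, himage, Set.ncard_image_of_injective _ (Sym2.map.injective Subtype.val_injective),
    Nat.card_coe_set_eq]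

lemma IsAcyclic.natCard_edgeSet_lt [Finite V] [Nonempty V] (hG : G.IsAcyclic) :
    Nat.card G.edgeSet < Nat.card V := by
  obtain ⟨T, hGT, -, hT⟩ := connected_top.exists_isTree_le_of_le_of_isAcyclic le_top hG
  have hcard := (isTree_iff_connected_and_card.mp hT).2
  have hmono : Nat.card G.edgeSet ≤ Nat.card T.edgeSet :=
    Nat.card_mono (Set.toFinite _) (edgeSet_mono hGT)
  omega

lemma IsAcyclic.edgesIn_lt_card [Finite V] (hG : G.IsAcyclic) {A : Finset V} (hA : A.Nonempty) :
    G.edgesIn A < #A := by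
  have : Nonempty (A : Set V) := hA.to_subtype
  rw [edgesIn_eq_natCard_induce, ← Nat.card_eq_finsetCard]
  exact (hG.induce _).natCard_edgeSet_lt

lemma edgesIn_lt_edgesIn_insert [Finite V] [DecidableEq V] {A : Finset V} {x y : V}
    (hxy : G.Adj x y) (hx : x ∈ A) (hy : y ∉ A) : G.edgesIn A < G.edgesIn (insert y A) := by
  have hedge : s(x, y) ∈ {e ∈ G.edgeSet | ∀ z ∈ e, z ∈ insert y A} := ⟨hxy, by simp [hx]⟩
  have hsub : {e ∈ G.edgeSet | ∀ z ∈ e, z ∈ A} ⊆ {e ∈ G.edgeSet | ∀ z ∈ e, z ∈ insert y A} :=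
    fun e he ↦ ⟨he.1, fun z hz ↦ mem_insert_of_mem (he.2 z hz)⟩
  exact Set.ncard_lt_ncard ((Set.ssubset_iff_of_subset hsub).mpr
    ⟨s(x, y), hedge, fun h ↦ hy (h.2 y (Sym2.mem_mk_right x y))⟩) (Set.toFinite _)

lemma edgesIn_add_edgesIn_le_edgesIn_union [Finite V] [DecidableEq V] {A B : Finset V}
    (hAB : Disjoint A B) : G.edgesIn A + G.edgesIn B ≤ G.edgesIn (A ∪ B) := by
  have hdisj : Disjoint {e ∈ G.edgeSet | ∀ x ∈ e, x ∈ A} {e ∈ G.edgeSet | ∀ x ∈ e, x ∈ B} := by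
    refine Set.disjoint_left.mpr fun e hA hB ↦ ?_
    induction e with
    | _ u v =>
      have hu := Sym2.mem_mk_left u v
      exact Finset.disjoint_left.mp hAB (hA.2 u hu) (hB.2 u hu)
  rw [edgesIn, edgesIn, ← Set.ncard_union_eq hdisj]
  refine Set.ncard_le_ncard ?_ (Set.toFinite _)
  rintro e (he | he)
  · exact ⟨he.1, fun x hx ↦ mem_union_left _ (he.2 x hx)⟩
  · exact ⟨he.1, fun x hx ↦ mem_union_right _ (he.2 x hx)⟩

section ConnectedComponent

variable [DecidableEq G.ConnectedComponent]

lemma edgesIn_le_sum_edgesIn_fiber [Finite V] (S : Finset V) :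
    G.edgesIn S ≤ ∑ c ∈ S.image G.connectedComponentMk,
      G.edgesIn {v ∈ S | G.connectedComponentMk v = c} := by
  refine (Set.ncard_le_ncard ?_ (Set.toFinite _)).trans (set_ncard_biUnion_le _ _)
  rintro e ⟨he, hS⟩
  induction e with
  | _ u v =>
    have hu := hS u (Sym2.mem_mk_left u v)
    refine Set.mem_biUnion (mem_image_of_mem _ hu) ⟨he, fun x hx ↦ ?_⟩
    rcases Sym2.mem_iff.mp hx with rfl | rfl
    · simp [hu]
    · simp [hS x hx, ConnectedComponent.eq.mpr (G.mem_edgeSet.mp he).symm.reachable]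

lemma IsAcyclic.edgesIn_add_card_image_le [Finite V] (hG : G.IsAcyclic) (S : Finset V) :
    G.edgesIn S + #(S.image G.connectedComponentMk) ≤ #S := by
  calc G.edgesIn S + #(S.image G.connectedComponentMk)
      ≤ ∑ c ∈ S.image G.connectedComponentMk,
          (G.edgesIn {v ∈ S | G.connectedComponentMk v = c} + 1) := by
        rw [sum_add_distrib, card_eq_sum_ones]
        gcongr
        exact edgesIn_le_sum_edgesIn_fiber S
    _ ≤ ∑ c ∈ S.image G.connectedComponentMk, #{v ∈ S | G.connectedComponentMk v = c} := by
        gcongr with c hc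
        obtain ⟨v, hv, rfl⟩ := mem_image.mp hc
        exact hG.edgesIn_lt_card ⟨v, mem_filter.mpr ⟨hv, rfl⟩⟩
    _ = #S := (card_eq_sum_card_image _ _).symm

lemma card_le_sum_ncard_supp_image [Finite V] (S : Finset V) :
    #S ≤ ∑ c ∈ S.image G.connectedComponentMk, c.supp.ncard :=
  calc #S = (S : Set V).ncard := (Set.ncard_coe_finset S).symm
    _ ≤ (⋃ c ∈ S.image G.connectedComponentMk, c.supp).ncard :=
      Set.ncard_le_ncard (fun _ hv ↦ Set.mem_biUnion (mem_image_of_mem _ hv)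
        (ConnectedComponent.connectedComponentMk_mem)) (Set.toFinite _)
    _ ≤ _ := set_ncard_biUnion_le _ _

end ConnectedComponent

lemma ConnectedComponent.exists_subset_supp_card_eq [Finite V] [DecidableEq V]
    (c : G.ConnectedComponent) {r : ℕ} (hr : r ≤ c.supp.ncard) :
    ∃ A : Finset V, ↑A ⊆ c.supp ∧ #A = r ∧ r - 1 ≤ G.edgesIn A := by
  induction r with
  | zero => exact ⟨∅, by simp, rfl, by simp⟩
  | succ r ih =>
    obtain ⟨A, hAc, rfl, hAe⟩ := ih (by omega)
    obtain ⟨w, hwc, hwA⟩ : ∃ w ∈ c.supp, w ∉ A := by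
      refine Set.not_subset.mp fun hcA ↦ ?_
      have := Set.ncard_le_ncard hcA A.finite_toSet
      rw [Set.ncard_coe_finset] at this
      omega
    rcases A.eq_empty_or_nonempty with rfl | ⟨a, ha⟩
    · exact ⟨{w}, by simpa using hwc, rfl, by simp⟩
    obtain ⟨p⟩ : G.Reachable a w :=
      ConnectedComponent.exact
        (((c.mem_supp_iff a).mp (hAc ha)).trans ((c.mem_supp_iff w).mp hwc).symm)
    obtain ⟨d, -, hdA, hdA'⟩ := p.exists_boundary_dart A ha hwA
    have hdc : d.snd ∈ c.supp :=
      (c.mem_supp_iff _).mpr ((ConnectedComponent.eq.mpr d.adj.symm.reachable).trans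
        ((c.mem_supp_iff _).mp (hAc hdA)))
    refine ⟨insert d.snd A, ?_, card_insert_of_notMem hdA', ?_⟩
    · simpa using Set.insert_subset hdc hAc
    · have := edgesIn_lt_edgesIn_insert d.adj hdA hdA'
      omega

lemma exists_card_eq_sub_le_edgesIn [Finite V] [DecidableEq V]
    (C : Finset G.ConnectedComponent) {k : ℕ} (hk : k ≤ ∑ c ∈ C, c.supp.ncard) :
    ∃ S : Finset V, ↑S ⊆ ⋃ c ∈ C, c.supp ∧ #S = k ∧ k - #C ≤ G.edgesIn S := by
  classical
  induction C using Finset.induction_on generalizing k with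
  | empty =>
    obtain rfl : k = 0 := by simpa using hk
    exact ⟨∅, by simp, rfl, by simp⟩
  | @insert c C hcC ih =>
    rw [sum_insert hcC] at hk
    have hsub : (⋃ c' ∈ C, c'.supp) ⊆ ⋃ c' ∈ insert c C, c'.supp :=
      Set.biUnion_subset_biUnion_left (by simp)
    by_cases hkC : k ≤ ∑ c' ∈ C, c'.supp.ncard
    · obtain ⟨S, hSC, hSk, hSe⟩ := ih hkC
      refine ⟨S, hSC.trans hsub, hSk, ?_⟩
      rw [card_insert_of_notMem hcC]
      omega
    -- Fill the components of `C` completely and take the remaining vertices from `c`.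
    obtain ⟨S, hSC, hSk, hSe⟩ := ih le_rfl
    obtain ⟨A, hAc, hAk, hAe⟩ := c.exists_subset_supp_card_eq
      (r := k - ∑ c' ∈ C, c'.supp.ncard) (by omega)
    have hAS : Disjoint A S := by
      rw [← disjoint_coe]
      refine Set.disjoint_of_subset hAc hSC (Set.disjoint_iUnion₂_right.mpr fun c' hc' ↦ ?_)
      exact G.pairwise_disjoint_supp_connectedComponent fun h ↦ hcC (h ▸ hc')
    refine ⟨A ∪ S, ?_, by rw [card_union_of_disjoint hAS]; omega, ?_⟩
    · rw [coe_union]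
      exact Set.union_subset (hAc.trans (Set.subset_biUnion_of_mem (mem_insert_self c C)))
        (hSC.trans hsub)
    · have := edgesIn_add_edgesIn_le_edgesIn_union (G := G) hAS
      rw [card_insert_of_notMem hcC]
      omega

end SimpleGraph

theorem forest_max_k_subgraph_edges_general (n k : ℕ) (G : SimpleGraph (Fin n))
    (hforest : G.IsAcyclic) (t : ℕ)
    (ht : IsLeast {s | ∃ C : Finset G.ConnectedComponent,
      C.card = s ∧ k ≤ ∑ c ∈ C, c.supp.ncard} t) :
    IsGreatest {e | ∃ S : Finset (Fin n), S.card = k ∧ G.edgesIn S = e} (k - t) := by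
  classical
  have upper : ∀ S : Finset (Fin n), #S = k → G.edgesIn S ≤ k - t := by
    intro S hSk
    have hS := hforest.edgesIn_add_card_image_le S
    have htS : t ≤ #(S.image G.connectedComponentMk) :=
      ht.2 ⟨_, rfl, hSk ▸ SimpleGraph.card_le_sum_ncard_supp_image (G := G) S⟩
    omega
  obtain ⟨C, rfl, hC⟩ := ht.1
  obtain ⟨S, -, hSk, hSe⟩ := SimpleGraph.exists_card_eq_sub_le_edgesIn C hC
  refine ⟨⟨S, hSk, le_antisymm (upper S hSk) hSe⟩, ?_⟩
  rintro e ⟨S, hSk, rfl⟩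
  exact upper S hSk

theorem forest_max_k_subgraph_edges (n k : ℕ) (hkn : k ≤ n) (G : SimpleGraph (Fin n))
    (hforest : G.IsAcyclic) (t : ℕ)
    (ht : IsLeast {s | ∃ C : Finset G.ConnectedComponent,
      C.card = s ∧ k ≤ ∑ c ∈ C, c.supp.ncard} t) :
    IsGreatest {e | ∃ S : Finset (Fin n), S.card = k ∧ G.edgesIn S = e} (k - t) :=
  forest_max_k_subgraph_edges_general n k G hforest t ht
end

section
/- Define a sequence by t_{n₁} = n₂ and t_{m−1} = t_m − ⌈2t_m/m⌉ for 2 ≤ m ≤ n₁. For any loopless multigraph G on n₁ vertices with n₂ edges, and for each m with 1 ≤ m ≤ n₁, there exists an m-vertex induced subgraph of G with at least t_m edges; in particular, if t_{k₁} > k₂ then G has a k₁-vertex induced subgraph with more than k₂ edges. -/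
open Finset

/-!
Deleting a vertex of minimum degree from an `m`-vertex multigraph with `e` edges removes at most
`⌈2e/m⌉` edges, since the degrees sum to `2e`. Because `e ↦ e - ⌈2e/m⌉` is monotone, a lower bound
`t m ≤ e` survives the deletion as `t (m - 1) ≤ e - ⌈2e/m⌉`, and downward induction from the whole
graph gives the bound for every `m`.
-/

theorem Nat.monotone_sub_mul_ceilDiv {k m : ℕ} (hm : 0 < m) (hkm : k ≤ m) :
    Monotone fun a => a - (k * a) ⌈/⌉ m := by
  refine monotone_nat_of_le_succ fun a => ?_
  have h_le : (k * a) ⌈/⌉ m ≤ a :=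
    (ceilDiv_le_iff_le_mul hm).2 (Nat.mul_le_mul_right a hkm)
  have h_succ : (k * (a + 1)) ⌈/⌉ m ≤ (k * a) ⌈/⌉ m + 1 := by
    rw [ceilDiv_le_iff_le_mul hm]
    have := le_smul_ceilDiv (b := k * a) hm
    rw [smul_eq_mul] at this
    linarith
  omega

namespace Multigraph

variable {n : ℕ} (G : Multigraph n)

def degreeIn (S : Finset (Fin n)) (v : Fin n) : ℕ := ∑ u ∈ S, G.W v u

theorem sum_degreeIn (S : Finset (Fin n)) : ∑ v ∈ S, G.degreeIn S v = 2 * G.edgesIn S := by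
  have h_split : ∀ u v,
      G.W u v = (if u < v then G.W u v else 0) + (if v < u then G.W u v else 0) := by
    intro u v
    rcases lt_trichotomy u v with h | rfl | h
    · simp [h, h.not_gt]
    · simp [G.loopless]
    · simp [h, h.not_gt]
  have h_upper : G.edgesIn S = ∑ u ∈ S, ∑ v ∈ S, if u < v then G.W u v else 0 := by
    simp only [edgesIn, sum_filter]
  have h_lower : ∑ u ∈ S, ∑ v ∈ S, (if v < u then G.W u v else 0) = G.edgesIn S := by
    rw [h_upper, sum_comm]
    simp only [G.symm]
  calc ∑ u ∈ S, G.degreeIn S u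
      = ∑ u ∈ S, ∑ v ∈ S, ((if u < v then G.W u v else 0) + (if v < u then G.W u v else 0)) :=
        sum_congr rfl fun u _ => sum_congr rfl fun v _ => h_split u v
    _ = 2 * G.edgesIn S := by rw [sum_congr rfl fun u _ => sum_add_distrib, sum_add_distrib,
        h_lower, ← h_upper, two_mul]

theorem edgesIn_insert {S : Finset (Fin n)} {v : Fin n} (hv : v ∉ S) :
    G.edgesIn (insert v S) = G.edgesIn S + G.degreeIn S v := by
  have h_col : ∑ u ∈ S, G.W u v = G.degreeIn S v := sum_congr rfl fun u _ => G.symm u v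
  have h_double : 2 * G.edgesIn (insert v S) = 2 * (G.edgesIn S + G.degreeIn S v) := by
    rw [← sum_degreeIn, mul_add, ← sum_degreeIn, sum_insert hv]
    simp only [degreeIn, sum_insert hv, G.loopless, sum_add_distrib] at h_col ⊢
    rw [h_col]
    ring
  omega

theorem edgesIn_erase {S : Finset (Fin n)} {v : Fin n} (hv : v ∈ S) :
    G.edgesIn S = G.edgesIn (S.erase v) + G.degreeIn S v := by
  have h := G.edgesIn_insert (notMem_erase v S)
  rwa [insert_erase hv, degreeIn, sum_erase _ (G.loopless v)] at h

theorem exists_degreeIn_le_ceilDiv {S : Finset (Fin n)} (hS : S.Nonempty) :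
    ∃ v ∈ S, G.degreeIn S v ≤ (2 * G.edgesIn S) ⌈/⌉ #S := by
  obtain ⟨v, hv, h_min⟩ := exists_min_image S (G.degreeIn S) hS
  refine ⟨v, hv, le_trans ?_ floorDiv_le_ceilDiv⟩
  rw [le_floorDiv_iff_mul_le hS.card_pos, smul_eq_mul, ← G.sum_degreeIn, ← smul_eq_mul,
    ← sum_const]
  exact sum_le_sum h_min

theorem exists_card_pred_edgesIn_ge {S : Finset (Fin n)} (hS : S.Nonempty) :
    ∃ T : Finset (Fin n), #T = #S - 1 ∧
      G.edgesIn S - (2 * G.edgesIn S) ⌈/⌉ #S ≤ G.edgesIn T := by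
  obtain ⟨v, hv, h_deg⟩ := G.exists_degreeIn_le_ceilDiv hS
  have h_split := G.edgesIn_erase hv
  exact ⟨S.erase v, card_erase_of_mem hv, by omega⟩

theorem exists_card_eq_le_edgesIn (t : ℕ → ℕ) (h_top : t n ≤ G.edgeCount)
    (h_rec : ∀ m, 2 ≤ m → m ≤ n → t (m - 1) ≤ t m - (2 * t m) ⌈/⌉ m)
    {m : ℕ} (hm : 1 ≤ m) (hmn : m ≤ n) :
    ∃ S : Finset (Fin n), #S = m ∧ t m ≤ G.edgesIn S := by
  induction hmn using Nat.decreasingInduction with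
  | self => exact ⟨univ, card_fin n, h_top⟩
  | of_succ k hk ih =>
    obtain ⟨S, hS_card, hS_edges⟩ := ih (by omega)
    obtain ⟨T, hT_card, hT_edges⟩ := G.exists_card_pred_edgesIn_ge (by
      rw [← card_pos, hS_card]; omega)
    refine ⟨T, by omega, ?_⟩
    rw [hS_card] at hT_edges
    calc t k ≤ t (k + 1) - (2 * t (k + 1)) ⌈/⌉ (k + 1) := h_rec (k + 1) (by omega) hk
      _ ≤ G.edgesIn S - (2 * G.edgesIn S) ⌈/⌉ (k + 1) :=
        Nat.monotone_sub_mul_ceilDiv (by omega) (by omega) hS_edges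
      _ ≤ G.edgesIn T := hT_edges

end Multigraph

theorem recursive_lower_bound (n₁ n₂ k₁ k₂ : ℕ) (t : ℕ → ℕ)
    (ht0 : t n₁ = n₂)
    (hrec : ∀ m, 2 ≤ m → m ≤ n₁ → t (m - 1) = t m - (2 * t m) ⌈/⌉ m)
    (G : Multigraph n₁) (hG : G.edgeCount = n₂) :
    (∀ m, 1 ≤ m → m ≤ n₁ →
        ∃ S : Finset (Fin n₁), S.card = m ∧ t m ≤ G.edgesIn S) ∧
      (1 ≤ k₁ → k₁ ≤ n₁ → k₂ < t k₁ →
        ∃ S : Finset (Fin n₁), S.card = k₁ ∧ k₂ < G.edgesIn S) := by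
  have h_bound : ∀ m, 1 ≤ m → m ≤ n₁ →
      ∃ S : Finset (Fin n₁), S.card = m ∧ t m ≤ G.edgesIn S := fun m hm hmn =>
    G.exists_card_eq_le_edgesIn t (ht0.trans hG.symm).le (fun m h₁ h₂ => (hrec m h₁ h₂).le) hm hmn
  refine ⟨h_bound, fun hk₁ hk₁n hk₂ => ?_⟩
  obtain ⟨S, hS_card, hS_edges⟩ := h_bound k₁ hk₁ hk₁n
  exact ⟨S, hS_card, hk₂.trans_le hS_edges⟩
end
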